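/- arXiv:math/0010323 — 2 statements merged into one kernel-verified Lean document; each statement's English description precedes it below -/
import Mathlib

section
/- Let W ⊂ GL(V) be a finite complex reflection group, with basic invariants f = (f_1,…,f_r) of degrees d_1,…,d_r, and let Δ_f be the discriminant polynomial. For d ∈ N, let J ⊂ {1,…,r} be the set of indices j with d ∤ d_j, and let 𝒥 be the ideal of C[X_1,…,X_r] generated by {X_j : j ∈ J}. Then d is a regular number for W if and only if Δ_f ∉ 𝒥. -/
/-!
Evaluating the basic invariants gives a map `π v = (f_j(v))_j` from `V` to `ℂ^r`. Its fibres
are exactly the `W`-orbits, since products `∏_{w ∈ W} P ∘ w` of interpolating polynomials separate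
orbits; and it is onto, since `ℂ[V]` is integral over `ℂ[f]` (`X_i` is a root of the monic
`∏_{w ∈ W} (T - X_i ∘ w)`), so lying-over and the Nullstellensatz apply. As
`f_j(ζ v) = ζ ^ d_j f_j(v)`, a vector `v` is a `ζ`-eigenvector of some `w ∈ W` iff `π v` lies in
the coordinate subspace `{c | c_j = 0 whenever d ∤ d_j}`, and `v` is regular iff
`Δ_f(π v) = ∏ l_H(v) ^ e_H ≠ 0`. So `d` is regular iff `Δ_f` does not vanish identically on that
subspace, i.e. iff `Δ_f ∉ 𝒥`.
-/

open MvPolynomial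

/-- A (complex) reflection of `ℂ^r`: a finite order invertible linear map, distinct from
the identity, whose fixed subspace `ker(s - Id)` is a hyperplane. -/
def IsReflection {r : ℕ} (w : (Fin r → ℂ) ≃ₗ[ℂ] (Fin r → ℂ)) : Prop :=
  IsOfFinOrder w ∧ w ≠ 1 ∧
    Module.finrank ℂ (LinearMap.ker ((w : (Fin r → ℂ) →ₗ[ℂ] (Fin r → ℂ)) - LinearMap.id))
      = r - 1

/-- The fixed subspace `ker(w - Id)` of a linear automorphism of `ℂ^r`. -/
noncomputable def fixedSpace {r : ℕ} (w : (Fin r → ℂ) ≃ₗ[ℂ] (Fin r → ℂ)) :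
    Submodule ℂ (Fin r → ℂ) :=
  LinearMap.ker ((w : (Fin r → ℂ) →ₗ[ℂ] (Fin r → ℂ)) - LinearMap.id)

/-- `d` is a regular number for `W` iff some `w ∈ W` has an eigenvector, for a root of
unity `ζ` of order `d`, which lies on no reflecting hyperplane (is fixed by no
reflection of `W`). -/
def IsRegularNumber {r : ℕ} (W : Subgroup ((Fin r → ℂ) ≃ₗ[ℂ] (Fin r → ℂ))) (d : ℕ) :
    Prop :=
  ∃ ζ : ℂ, IsPrimitiveRoot ζ d ∧ ∃ w, w ∈ W ∧ ∃ v : Fin r → ℂ,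
    (∀ s, s ∈ W → IsReflection s → s v ≠ v) ∧ w v = ζ • v

namespace MvPolynomial

variable {R K σ ι : Type*}

theorem eval_aeval [CommSemiring R] (f : ι → MvPolynomial σ R) (v : σ → R)
    (p : MvPolynomial ι R) : eval v (aeval f p) = eval (fun i => eval v (f i)) p := by
  simp only [← coe_aeval_eq_eval]
  exact aeval_bind₁ v f p

theorem IsHomogeneous.eval_smul [CommSemiring R] {φ : MvPolynomial σ R} {n : ℕ}
    (h : φ.IsHomogeneous n) (c : R) (v : σ → R) :
    eval (c • v) φ = c ^ n * eval v φ := by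
  rw [eval_eq, eval_eq, Finset.mul_sum]
  refine Finset.sum_congr rfl fun m hm => ?_
  simp only [Pi.smul_apply, smul_eq_mul, mul_pow, Finset.prod_mul_distrib,
    Finset.prod_pow_eq_pow_sum, ← h.degree_eq_sum_deg_support hm]
  ring

theorem mem_span_X_image_iff_forall_eval_eq_zero [CommRing R] [IsDomain R] [Infinite R]
    {s : Set σ} {p : MvPolynomial σ R} :
    p ∈ Ideal.span (X '' s) ↔ ∀ c : σ → R, (∀ i ∈ s, c i = 0) → eval c p = 0 := by
  classical
  set I : Ideal (MvPolynomial σ R) := Ideal.span (X '' s)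
  constructor
  · intro hp c hc
    have hI : I ≤ RingHom.ker (eval c) :=
      Ideal.span_le.2 (by rintro _ ⟨i, hi, rfl⟩; simp [hc i hi])
    exact hI hp
  · intro hp
    let κ : MvPolynomial σ R →ₐ[R] MvPolynomial σ R := aeval fun i => if i ∈ s then 0 else X i
    have hκ : κ p = 0 := funext fun y => by
      rw [map_zero, eval_aeval]
      exact hp _ fun i hi => by simp [hi]
    have hκI : (Ideal.Quotient.mkₐ R I).comp κ = Ideal.Quotient.mkₐ R I := by
      ext i
      by_cases hi : i ∈ s
      · have hXi : X i ∈ I := Ideal.subset_span (Set.mem_image_of_mem X hi)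
        simp [κ, hi, Ideal.Quotient.eq_zero_iff_mem.2 hXi]
      · simp [κ, hi]
    exact Ideal.Quotient.eq_zero_iff_mem.1 (by simpa [hκ] using congr($hκI p).symm)

theorem eval_prod_pow_ne_zero_iff {α : Type*} [Field K] {A : Finset α}
    {l : α → MvPolynomial σ K} {Z : α → Set (σ → K)} {e : α → ℕ}
    (hl : ∀ a ∈ A, ∀ v, eval v (l a) = 0 ↔ v ∈ Z a) (he : ∀ a ∈ A, e a ≠ 0) (v : σ → K) :
    eval v (∏ a ∈ A, l a ^ e a) ≠ 0 ↔ ∀ a ∈ A, v ∉ Z a := by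
  simp +contextual [Finset.prod_ne_zero_iff, he, hl]

theorem exists_eval_ne_zero_of_notMem [Field K] {S : Finset (σ → K)} {u : σ → K}
    (hu : u ∉ S) : ∃ P : MvPolynomial σ K, eval u P ≠ 0 ∧ ∀ x ∈ S, eval x P = 0 := by
  have hcoord : ∀ x ∈ S, ∃ i, x i ≠ u i := fun x hx =>
    Function.ne_iff.1 (ne_of_mem_of_not_mem hx hu)
  choose k hk using hcoord
  refine ⟨∏ x ∈ S.attach, (X (k x x.2) - C (x.1 (k x x.2))), ?_, fun x hx => ?_⟩
  · simpa [Finset.prod_ne_zero_iff, sub_eq_zero] using fun x hx => (hk x hx).symm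
  · rw [map_prod]
    exact Finset.prod_eq_zero (S.mem_attach ⟨x, hx⟩) (by simp)

theorem exists_eval_eq [Field K] (S : Finset (σ → K)) (g : (σ → K) → K) :
    ∃ P : MvPolynomial σ K, ∀ x ∈ S, eval x P = g x := by
  classical
  choose B hBx hBS using fun x => exists_eval_ne_zero_of_notMem (S.notMem_erase x)
  refine ⟨∑ x ∈ S, C (g x / eval x (B x)) * B x, fun x hx => ?_⟩
  rw [map_sum, Finset.sum_eq_single_of_mem x hx fun y _ hyx => by
    simp [hBS y x (Finset.mem_erase.2 ⟨hyx.symm, hx⟩)]]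
  simp [hBx x]

theorem exists_eval_eq_of_isIntegral [Field K] [IsAlgClosed K] [Finite σ]
    {f : ι → MvPolynomial σ K} (hf : AlgebraicIndependent K f)
    (hint : (aeval f : MvPolynomial ι K →ₐ[K] MvPolynomial σ K).toRingHom.IsIntegral)
    (c : ι → K) : ∃ v : σ → K, ∀ i, eval v (f i) = c i := by
  let _ := (aeval f : MvPolynomial ι K →ₐ[K] MvPolynomial σ K).toRingHom.toAlgebra
  have : Algebra.IsIntegral (MvPolynomial ι K) (MvPolynomial σ K) := ⟨hint⟩
  have hker : RingHom.ker (algebraMap (MvPolynomial ι K) (MvPolynomial σ K)) ≤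
      vanishingIdeal K {c} := by
    intro p hp
    rw [hf (hp.trans (map_zero (aeval f)).symm)]
    exact zero_mem _
  obtain ⟨Q, hQ, hQc⟩ := Ideal.exists_ideal_over_maximal_of_isIntegral _ hker
  obtain ⟨v, rfl⟩ := isMaximal_iff_eq_vanishingIdeal_singleton.1 hQ
  refine ⟨v, fun i => ?_⟩
  have hi : X i - C (c i) ∈ (vanishingIdeal K {v}).comap (algebraMap _ (MvPolynomial σ K)) := by
    simp [hQc]
  rw [Ideal.mem_comap, mem_vanishingIdeal_singleton_iff] at hi
  simpa [sub_eq_zero, RingHom.algebraMap_toAlgebra] using hi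

variable [Field K] [Fintype σ] [DecidableEq σ]

noncomputable def compLinearMap (w : (σ → K) →ₗ[K] (σ → K)) :
    MvPolynomial σ K →ₐ[K] MvPolynomial σ K :=
  aeval fun i => ∑ j, C (LinearMap.toMatrix' w i j) * X j

theorem eval_compLinearMap (w : (σ → K) →ₗ[K] (σ → K)) (v : σ → K) (p : MvPolynomial σ K) :
    eval v (compLinearMap w p) = eval (w v) p := by
  rw [compLinearMap, eval_aeval, ← LinearMap.toMatrix'_mulVec w v]
  congr 2
  funext i
  simp only [map_sum, map_mul, eval_C, eval_X, Matrix.mulVec, dotProduct]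

theorem compLinearMap_id_X (i : σ) : compLinearMap LinearMap.id (X i : MvPolynomial σ K) = X i := by
  simp [compLinearMap, Pi.single_apply, apply_ite C]

end MvPolynomial

section Invariants

variable {K σ ι : Type*} [Field K] {W : Subgroup ((σ → K) ≃ₗ[K] (σ → K))} [Fintype W]

theorem prod_comp_apply_of_mem {β : Type*} [CommMonoid β] (g : (σ → K) → β)
    {u : (σ → K) ≃ₗ[K] (σ → K)} (hu : u ∈ W) (x : σ → K) :
    ∏ w : W, g (w.1 (u x)) = ∏ w : W, g (w.1 x) :=
  Fintype.prod_equiv (Equiv.mulRight ⟨u, hu⟩) _ _ fun _ => rfl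

variable [Fintype σ] [DecidableEq σ] {f : ι → MvPolynomial σ K}
  (hf_gen : ∀ P : MvPolynomial σ K, (∀ w ∈ W, ∀ v, eval (w v) P = eval v P) →
    P ∈ Algebra.adjoin K (Set.range f))
include hf_gen

theorem isIntegralElem_X_of_invariants_le_adjoin (i : σ) :
    (aeval f : MvPolynomial ι K →ₐ[K] MvPolynomial σ K).toRingHom.IsIntegralElem (X i) := by
  let q : Polynomial (MvPolynomial σ K) :=
    ∏ w : W, (Polynomial.X - Polynomial.C (compLinearMap w.1 (X i)))
  have hq_map : ∀ x : σ → K,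
      q.map (eval x) = ∏ w : W, (Polynomial.X - Polynomial.C (w.1 x i)) := by
    intro x
    simp [q, Polynomial.map_prod, eval_compLinearMap]
  have hq_coeff :
      ∀ k, q.coeff k ∈ Set.range (aeval f : MvPolynomial ι K →ₐ[K] MvPolynomial σ K) := by
    intro k
    have hinv : ∀ u ∈ W, ∀ x, eval (u x) (q.coeff k) = eval x (q.coeff k) := by
      intro u hu x
      rw [← Polynomial.coeff_map, ← Polynomial.coeff_map, hq_map, hq_map,
        prod_comp_apply_of_mem (fun y => Polynomial.X - Polynomial.C (y i)) hu]
    simpa [Algebra.adjoin_range_eq_range_aeval] using hf_gen _ hinv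
  obtain ⟨q', hq', -, hq'_monic⟩ := Polynomial.lifts_and_degree_eq_and_monic
    ((Polynomial.lifts_iff_coeff_lifts q).2 hq_coeff)
    (Polynomial.monic_prod_of_monic _ _ fun w _ => Polynomial.monic_X_sub_C _)
  refine ⟨q', hq'_monic, ?_⟩
  rw [Polynomial.eval₂_eq_eval_map, hq', Polynomial.eval_prod]
  exact Finset.prod_eq_zero (Finset.mem_univ 1) (by simp [compLinearMap_id_X])

theorem isIntegral_aeval_of_invariants_le_adjoin :
    (aeval f : MvPolynomial ι K →ₐ[K] MvPolynomial σ K).toRingHom.IsIntegral := by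
  intro p
  induction p using MvPolynomial.induction_on with
  | C a => simpa using (aeval f).toRingHom.isIntegralElem_map (x := C a)
  | add p q hp hq => exact hp.add _ hq
  | mul_X p i hp => exact hp.mul _ (isIntegralElem_X_of_invariants_le_adjoin hf_gen i)

theorem exists_mem_apply_eq_of_eval_eq {u v : σ → K}
    (huv : ∀ i, eval u (f i) = eval v (f i)) : ∃ w ∈ W, w v = u := by
  classical
  by_contra! hvu
  let orbit : (σ → K) → Finset (σ → K) :=
    fun x => Finset.univ.image fun w : W => w.1 x
  have hu_orbit : u ∉ orbit v := by
    simpa [orbit] using fun w hw => hvu w hw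
  obtain ⟨P, hP⟩ := exists_eval_eq (orbit u ∪ orbit v) fun x => if x ∈ orbit v then 1 else 0
  let Q := ∏ w : W, compLinearMap w.1 P
  have hQ : ∀ x, eval x Q = ∏ w : W, eval (w.1 x) P := by
    simp [Q, eval_compLinearMap]
  have hQ_mem : Q ∈ Algebra.adjoin K (Set.range f) := hf_gen Q fun w hw x => by
    rw [hQ, hQ, prod_comp_apply_of_mem (fun y => eval y P) hw]
  rw [Algebra.adjoin_range_eq_range_aeval] at hQ_mem
  obtain ⟨q, hq⟩ := hQ_mem
  have hQu : eval u Q = 0 := by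
    have hu : u ∈ orbit u := Finset.mem_image.2 ⟨1, Finset.mem_univ _, rfl⟩
    rw [hQ]
    refine Finset.prod_eq_zero (Finset.mem_univ 1) ?_
    show eval u P = 0
    rw [hP u (Finset.mem_union_left _ hu), if_neg hu_orbit]
  have hQv : eval v Q = 1 := by
    rw [hQ]
    refine Finset.prod_eq_one fun w _ => ?_
    have hw : w.1 v ∈ orbit v := by simp [orbit]
    simp [hP _ (Finset.mem_union_right _ hw), hw]
  have : eval u Q = eval v Q := by
    simp only [← hq, AlgHom.toRingHom_eq_coe, RingHom.coe_coe, eval_aeval, huv]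
  simp [hQu, hQv] at this

theorem exists_mem_apply_eq_smul_iff {deg : ι → ℕ} (hf_hom : ∀ j, (f j).IsHomogeneous (deg j))
    (hf_inv : ∀ j, ∀ w ∈ W, ∀ v, eval (w v) (f j) = eval v (f j))
    {ζ : K} {d : ℕ} (hζ : IsPrimitiveRoot ζ d) (v : σ → K) :
    (∃ w ∈ W, w v = ζ • v) ↔ ∀ j, ¬ d ∣ deg j → eval v (f j) = 0 := by
  constructor
  · rintro ⟨w, hw, hwv⟩ j hj
    have h := hf_inv j w hw v
    rw [hwv, (hf_hom j).eval_smul] at h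
    by_contra hne
    exact hj ((hζ.pow_eq_one_iff_dvd _).1 (mul_right_cancel₀ hne (h.trans (one_mul _).symm)))
  · intro hv
    refine exists_mem_apply_eq_of_eval_eq hf_gen fun j => ?_
    rw [(hf_hom j).eval_smul]
    by_cases hj : d ∣ deg j
    · rw [(hζ.pow_eq_one_iff_dvd _).2 hj, one_mul]
    · rw [hv j hj, mul_zero]

end Invariants

theorem mem_fixedSpace_iff {r : ℕ} {w : (Fin r → ℂ) ≃ₗ[ℂ] (Fin r → ℂ)} {v : Fin r → ℂ} :
    v ∈ fixedSpace w ↔ w v = v := by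
  simp [fixedSpace, sub_eq_zero]

theorem eval_aeval_discriminant_ne_zero_iff {r : ℕ} {W : Subgroup ((Fin r → ℂ) ≃ₗ[ℂ] (Fin r → ℂ))}
    (hWfin : (W : Set ((Fin r → ℂ) ≃ₗ[ℂ] (Fin r → ℂ))).Finite)
    {f : Fin r → MvPolynomial (Fin r) ℂ} {A : Finset (Submodule ℂ (Fin r → ℂ))}
    (hA : ∀ H, H ∈ A ↔ ∃ w, w ∈ W ∧ IsReflection w ∧ fixedSpace w = H)
    {l : Submodule ℂ (Fin r → ℂ) → MvPolynomial (Fin r) ℂ}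
    (hl : ∀ H ∈ A, ∀ v : Fin r → ℂ, eval v (l H) = 0 ↔ v ∈ H)
    {e : Submodule ℂ (Fin r → ℂ) → ℕ}
    (he : ∀ H ∈ A, e H = Set.ncard {w | w ∈ W ∧ ∀ v ∈ H, w v = v})
    {Δ : MvPolynomial (Fin r) ℂ} (hΔ : aeval f Δ = ∏ H ∈ A, l H ^ e H) (v : Fin r → ℂ) :
    eval v (aeval f Δ) ≠ 0 ↔ ∀ s ∈ W, IsReflection s → s v ≠ v := by
  have he_ne : ∀ H ∈ A, e H ≠ 0 := fun H hH => by
    have hfin : {w | w ∈ W ∧ ∀ v ∈ H, w v = v}.Finite := hWfin.subset fun _ hw => hw.1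
    rw [he H hH]
    exact ((Set.ncard_pos hfin).2 ⟨1, W.one_mem, fun _ _ => rfl⟩).ne'
  rw [hΔ, eval_prod_pow_ne_zero_iff (Z := fun H : Submodule ℂ (Fin r → ℂ) => H) hl he_ne]
  constructor
  · intro h s hs hs_refl hsv
    exact h _ ((hA _).2 ⟨s, hs, hs_refl, rfl⟩) (mem_fixedSpace_iff.2 hsv)
  · intro h H hH hvH
    obtain ⟨s, hs, hs_refl, rfl⟩ := (hA H).1 hH
    exact h s hs hs_refl (mem_fixedSpace_iff.1 hvH)

theorem regular_number_iff_discriminant_not_in_ideal_general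
    (r : ℕ) (W : Subgroup ((Fin r → ℂ) ≃ₗ[ℂ] (Fin r → ℂ)))
    (hWfin : (W : Set ((Fin r → ℂ) ≃ₗ[ℂ] (Fin r → ℂ))).Finite)
    (deg : Fin r → ℕ) (f : Fin r → MvPolynomial (Fin r) ℂ)
    (hf_hom : ∀ i, (f i).IsHomogeneous (deg i))
    (hf_alg : AlgebraicIndependent ℂ f)
    (hf_gen : ∀ P : MvPolynomial (Fin r) ℂ,
      (∀ w ∈ W, ∀ v : Fin r → ℂ, eval (w v) P = eval v P) ↔
        P ∈ Algebra.adjoin ℂ (Set.range f))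
    (A : Finset (Submodule ℂ (Fin r → ℂ)))
    (hA : ∀ H, H ∈ A ↔ ∃ w, w ∈ W ∧ IsReflection w ∧ fixedSpace w = H)
    (l : Submodule ℂ (Fin r → ℂ) → MvPolynomial (Fin r) ℂ)
    (hl : ∀ H ∈ A, (l H).IsHomogeneous 1 ∧ ∀ v : Fin r → ℂ, (eval v (l H) = 0 ↔ v ∈ H))
    (e : Submodule ℂ (Fin r → ℂ) → ℕ)
    (he : ∀ H ∈ A, e H = Set.ncard {w | w ∈ W ∧ ∀ v ∈ H, w v = v})
    (Δ : MvPolynomial (Fin r) ℂ)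
    (hΔ : aeval f Δ = ∏ H ∈ A, l H ^ e H)
    (d : ℕ) :
    IsRegularNumber W d ↔
      Δ ∉ Ideal.span ((fun j => (X j : MvPolynomial (Fin r) ℂ)) '' {j | ¬ d ∣ deg j}) := by
  have : Fintype W := hWfin.fintype
  have hf_gen' : ∀ P, (∀ w ∈ W, ∀ v, eval (w v) P = eval v P) →
      P ∈ Algebra.adjoin ℂ (Set.range f) := fun P => (hf_gen P).1
  have hf_inv j := (hf_gen (f j)).2 (Algebra.subset_adjoin (Set.mem_range_self j))
  have hreg := eval_aeval_discriminant_ne_zero_iff hWfin hA (fun H hH => (hl H hH).2) he hΔ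
  have heigen {ζ : ℂ} (hζ : IsPrimitiveRoot ζ d) :=
    exists_mem_apply_eq_smul_iff hf_gen' hf_hom hf_inv hζ
  rw [mem_span_X_image_iff_forall_eval_eq_zero]
  push Not
  constructor
  · rintro ⟨ζ, hζ, w, hw, v, hv_reg, hwv⟩
    refine ⟨fun j => eval v (f j), (heigen hζ v).1 ⟨w, hw, hwv⟩, ?_⟩
    rw [← eval_aeval]
    exact (hreg v).2 hv_reg
  · rintro ⟨c, hc, hΔc⟩
    obtain ⟨v, hv⟩ := exists_eval_eq_of_isIntegral hf_alg
      (isIntegral_aeval_of_invariants_le_adjoin hf_gen') c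
    obtain rfl : (fun j => eval v (f j)) = c := funext hv
    -- for `d = 0` Mathlib's convention gives `IsPrimitiveRoot 0 0`
    obtain ⟨ζ, hζ⟩ : ∃ ζ : ℂ, IsPrimitiveRoot ζ d := d.eq_zero_or_pos.elim
      (fun hd => ⟨0, hd ▸ .zero⟩) fun hd => ⟨_, Complex.isPrimitiveRoot_exp d hd.ne'⟩
    obtain ⟨w, hw, hwv⟩ := (heigen hζ v).2 hc
    exact ⟨ζ, hζ, w, hw, v, (hreg v).1 (by rwa [eval_aeval]), hwv⟩

/-- Let `W ⊂ GL(ℂ^r)` be a finite complex reflection group with basic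
invariants `f` of degrees `deg i`, and discriminant polynomial `Δ_f` (the polynomial
with `Φ_f(Δ_f) = ∏_{H ∈ A} l_H ^ e_H`). For `d ∈ ℕ`, let `𝒥` be the ideal of
`ℂ[X_1,…,X_r]` generated by the variables `X j` with `d ∤ deg j`. Then `d` is a regular
number for `W` if and only if `Δ_f ∉ 𝒥`. -/
theorem regular_number_iff_discriminant_not_in_ideal
    (r : ℕ) (W : Subgroup ((Fin r → ℂ) ≃ₗ[ℂ] (Fin r → ℂ)))
    (hWfin : (W : Set ((Fin r → ℂ) ≃ₗ[ℂ] (Fin r → ℂ))).Finite)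
    (hWrefl : Subgroup.closure {w | w ∈ W ∧ IsReflection w} = W)
    (deg : Fin r → ℕ) (f : Fin r → MvPolynomial (Fin r) ℂ)
    (hf_hom : ∀ i, (f i).IsHomogeneous (deg i))
    (hf_alg : AlgebraicIndependent ℂ f)
    (hf_gen : ∀ P : MvPolynomial (Fin r) ℂ,
      (∀ w ∈ W, ∀ v : Fin r → ℂ, eval (w v) P = eval v P) ↔
        P ∈ Algebra.adjoin ℂ (Set.range f))
    (A : Finset (Submodule ℂ (Fin r → ℂ)))
    (hA : ∀ H, H ∈ A ↔ ∃ w, w ∈ W ∧ IsReflection w ∧ fixedSpace w = H)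
    (l : Submodule ℂ (Fin r → ℂ) → MvPolynomial (Fin r) ℂ)
    (hl : ∀ H ∈ A, (l H).IsHomogeneous 1 ∧ ∀ v : Fin r → ℂ, (eval v (l H) = 0 ↔ v ∈ H))
    (e : Submodule ℂ (Fin r → ℂ) → ℕ)
    (he : ∀ H ∈ A, e H = Set.ncard {w | w ∈ W ∧ ∀ v ∈ H, w v = v})
    (Δ : MvPolynomial (Fin r) ℂ)
    (hΔ : aeval f Δ = ∏ H ∈ A, l H ^ e H)
    (d : ℕ) :
    IsRegularNumber W d ↔
      Δ ∉ Ideal.span ((fun j => (X j : MvPolynomial (Fin r) ℂ)) '' {j | ¬ d ∣ deg j}) :=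
  regular_number_iff_discriminant_not_in_ideal_general r W hWfin deg f hf_hom hf_alg hf_gen A hA l
    hl e he Δ hΔ d
end

section
/- Let W be an irreducible complex reflection group of rank r with degrees d_1 ≤ … ≤ d_r, and let i_0 be an index with d := d_{i_0}, such that d_{i_0} is the unique degree divisible by d (i.e., for all i, d | d_i implies i = i_0). If d is a regular number, then for EVERY system of basic invariants f, the discriminant Δ_f is monic in X_{i_0}. -/
open MvPolynomial

lemma my_eval_smul_of_isHomogeneous {r : ℕ} (φ : MvPolynomial (Fin r) ℂ) (n : ℕ)
    (h : φ.IsHomogeneous n) (c : ℂ) (x : Fin r → ℂ) :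
    eval (c • x) φ = c ^ n * eval x φ := by
  rw [eval_eq, eval_eq, Finset.mul_sum]
  apply Finset.sum_congr rfl
  intro d hd
  have hdeg : d.degree = n := by
    by_contra hne
    exact (mem_support_iff.mp hd) (h.coeff_eq_zero hne)
  have : ∏ i ∈ d.support, (c • x) i ^ d i
      = (∏ i ∈ d.support, c ^ d i) * ∏ i ∈ d.support, x i ^ d i := by
    rw [← Finset.prod_mul_distrib]
    apply Finset.prod_congr rfl
    intro i _
    simp [mul_pow]
  rw [this, Finset.prod_pow_eq_pow_sum]
  have : ∑ i ∈ d.support, d i = n := hdeg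
  rw [this]; ring

lemma my_weight_eq {r : ℕ} (deg : Fin r → ℕ) (m : Fin r →₀ ℕ) :
    (Finsupp.weight deg) m = ∑ j : Fin r, m j * deg j := by
  rw [Finsupp.weight_apply, Finsupp.sum_fintype]
  · rfl
  · intro j; simp

lemma my_aeval_isHomogeneous {r : ℕ}
    (f : Fin r → MvPolynomial (Fin r) ℂ) (deg : Fin r → ℕ)
    (hf : ∀ i, (f i).IsHomogeneous (deg i))
    (p : MvPolynomial (Fin r) ℂ) (n : ℕ)
    (hp : p.IsWeightedHomogeneous deg n) :
    (aeval f p).IsHomogeneous n := by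
  conv_lhs => rw [← p.support_sum_monomial_coeff]
  rw [map_sum]
  apply IsHomogeneous.sum
  intro d hd
  rw [aeval_monomial]
  have hw : ∑ j ∈ d.support, deg j * d j = n := by
    have h1 := hp (mem_support_iff.mp hd)
    rw [Finsupp.weight_apply, Finsupp.sum] at h1
    rw [← h1]
    apply Finset.sum_congr rfl
    intro j _
    simp [mul_comm]
  have h2 : (d.prod fun i k => f i ^ k).IsHomogeneous n := by
    rw [Finsupp.prod, ← hw]
    exact IsHomogeneous.prod d.support _ _ (fun i _ => (hf i).pow (d i))
  have h3 := (isHomogeneous_C (Fin r) (coeff d p)).mul h2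
  rw [zero_add] at h3
  simpa [algebraMap_eq] using h3

/-- aeval of a polynomial whose monomials all have weight ≠ n has vanishing
n-th homogeneous component. -/
lemma my_homComp_aeval_eq_zero {r : ℕ}
    (f : Fin r → MvPolynomial (Fin r) ℂ) (deg : Fin r → ℕ)
    (hf : ∀ i, (f i).IsHomogeneous (deg i))
    (q : MvPolynomial (Fin r) ℂ) (n : ℕ)
    (hq : ∀ d ∈ q.support, (Finsupp.weight deg) d ≠ n) :
    homogeneousComponent n (aeval f q) = 0 := by
  conv_lhs => rw [← q.support_sum_monomial_coeff, map_sum, map_sum]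
  apply Finset.sum_eq_zero
  intro d hd
  have hmono : (aeval f (monomial d (coeff d q))).IsHomogeneous ((Finsupp.weight deg) d) := by
    apply my_aeval_isHomogeneous f deg hf
    intro d' hd'
    have : d' = d := by
      by_contra hne
      rw [coeff_monomial, if_neg (Ne.symm hne)] at hd'
      exact hd' rfl
    rw [this]
  rw [homogeneousComponent_of_mem ((mem_homogeneousSubmodule _ _).mpr hmono),
    if_neg]
  exact fun h => hq d hd h.symm


/-- Let `W` be an irreducible complex reflection group of rank `r` with
degrees `deg 0 ≤ … ≤ deg (r-1)`, and let `i₀` be an index such that `d := deg i₀` is the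
unique degree divisible by `d` (for all `i`, `d ∣ deg i → i = i₀`). If `d` is a regular
number, then for EVERY system of basic invariants `f`, the discriminant `Δ_f` is monic
in `X i₀`: it is nonzero and every monomial of `Δ_f` attaining the degree
`degreeOf i₀ Δ_f` in `X i₀` involves no other variable (so the head coefficient of
`Δ_f` in `X i₀` is a nonzero scalar). -/
theorem discriminant_monic_for_every_system
    (r : ℕ) (W : Subgroup ((Fin r → ℂ) ≃ₗ[ℂ] (Fin r → ℂ)))
    (hWfin : (W : Set ((Fin r → ℂ) ≃ₗ[ℂ] (Fin r → ℂ))).Finite)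
    (hWrefl : Subgroup.closure {w | w ∈ W ∧ IsReflection w} = W)
    (hirr : ∀ U : Submodule ℂ (Fin r → ℂ),
      (∀ w ∈ W, ∀ v ∈ U, w v ∈ U) → U = ⊥ ∨ U = ⊤)
    (deg : Fin r → ℕ) (hmono : Monotone deg)
    (A : Finset (Submodule ℂ (Fin r → ℂ)))
    (hA : ∀ H, H ∈ A ↔ ∃ w, w ∈ W ∧ IsReflection w ∧ fixedSpace w = H)
    (l : Submodule ℂ (Fin r → ℂ) → MvPolynomial (Fin r) ℂ)
    (hl : ∀ H ∈ A, (l H).IsHomogeneous 1 ∧ ∀ v : Fin r → ℂ, (eval v (l H) = 0 ↔ v ∈ H))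
    (e : Submodule ℂ (Fin r → ℂ) → ℕ)
    (he : ∀ H ∈ A, e H = Set.ncard {w | w ∈ W ∧ ∀ v ∈ H, w v = v})
    (i₀ : Fin r)
    (huniq : ∀ i, deg i₀ ∣ deg i → i = i₀)
    (hreg : IsRegularNumber W (deg i₀)) :
    ∀ (f : Fin r → MvPolynomial (Fin r) ℂ) (Δ : MvPolynomial (Fin r) ℂ),
      (∀ i, (f i).IsHomogeneous (deg i)) →
      AlgebraicIndependent ℂ f →
      (∀ P : MvPolynomial (Fin r) ℂ,
        (∀ w ∈ W, ∀ v : Fin r → ℂ, eval (w v) P = eval v P) ↔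
          P ∈ Algebra.adjoin ℂ (Set.range f)) →
      aeval f Δ = ∏ H ∈ A, l H ^ e H →
      (Δ ≠ 0 ∧ ∀ m ∈ Δ.support, m i₀ = Δ.degreeOf i₀ → ∀ j, j ≠ i₀ → m j = 0) := by
  intro f Δ hfhom hfind hfinv hΔ
  classical
  have hinj : Function.Injective (aeval (R := ℂ) f) :=
    algebraicIndependent_iff_injective_aeval.mp hfind
  -- all degrees are positive
  have hdegpos : ∀ i, 0 < deg i := by
    intro i
    rcases Nat.eq_zero_or_pos (deg i) with h0 | h
    · exfalso
      have hh := hfhom i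
      rw [h0] at hh
      obtain ⟨c, hc⟩ : ∃ c, f i = C c := by
        refine ⟨coeff 0 (f i), ?_⟩
        ext d
        rw [coeff_C]
        rcases eq_or_ne d 0 with rfl | hd0
        · simp
        · rw [if_neg fun hh' => hd0 hh'.symm]
          exact hh.coeff_eq_zero fun hdeg =>
            hd0 ((Finsupp.degree_eq_zero_iff d).mp hdeg)
      have hXC : (X i : MvPolynomial (Fin r) ℂ) = C c := by
        apply hinj
        rw [aeval_X, aeval_C, algebraMap_eq, hc]
      have h1 := congrArg totalDegree hXC
      rw [totalDegree_X, totalDegree_C] at h1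
      exact one_ne_zero h1
    · exact h
  -- each f i is W-invariant
  have hfi_inv : ∀ i, ∀ w ∈ W, ∀ v : Fin r → ℂ, eval (w v) (f i) = eval v (f i) :=
    fun i => (hfinv (f i)).mpr (Algebra.subset_adjoin ⟨i, rfl⟩)
  obtain ⟨ζ, hζ, w, hwW, v, hv, hwv⟩ := hreg
  -- all basic invariants except f i₀ vanish at the regular eigenvector
  have hfv : ∀ i, i ≠ i₀ → eval v (f i) = 0 := by
    intro i hi
    have h1 : eval v (f i) = ζ ^ deg i * eval v (f i) := by
      conv_lhs => rw [← hfi_inv i w hwW v, hwv,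
        my_eval_smul_of_isHomogeneous (f i) (deg i) (hfhom i) ζ v]
    have h2 : ζ ^ deg i ≠ 1 := fun hh => hi (huniq i (hζ.dvd_of_pow_eq_one _ hh))
    have h3 : (1 - ζ ^ deg i) * eval v (f i) = 0 := by linear_combination h1
    rcases mul_eq_zero.mp h3 with hh | hh
    · exact absurd (by linear_combination -hh : ζ ^ deg i = 1) h2
    · exact hh
  set pt : Fin r → ℂ := fun i => eval v (f i) with hpt
  have h1ev : eval v (aeval f Δ) = eval pt Δ := by
    rw [map_aeval]
    have hcomp : (eval v).comp (algebraMap ℂ (MvPolynomial (Fin r) ℂ)) = RingHom.id ℂ :=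
      RingHom.ext fun c => by simp
    rw [hcomp]
    rfl
  have hevpt : eval pt Δ = ∏ H ∈ A, (eval v (l H)) ^ e H := by
    rw [← h1ev, hΔ, eval_prod]
    exact Finset.prod_congr rfl fun H _ => by rw [eval_pow]
  have hlne : ∀ H ∈ A, eval v (l H) ≠ 0 := by
    intro H hH h0
    obtain ⟨s, hsW, hsrefl, hsfix⟩ := (hA H).mp hH
    have hvH : v ∈ H := ((hl H hH).2 v).mp h0
    rw [← hsfix] at hvH
    have hsv : s v = v := by
      rw [fixedSpace, LinearMap.mem_ker, LinearMap.sub_apply, LinearMap.id_apply,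
        sub_eq_zero] at hvH
      exact hvH
    exact hv s hsW hsrefl hsv
  have hne : eval pt Δ ≠ 0 := by
    rw [hevpt]
    exact Finset.prod_ne_zero_iff.mpr fun H hH => pow_ne_zero _ (hlne H hH)
  -- there is a monomial of Δ involving only X i₀
  have hpure : ∃ m ∈ Δ.support, ∀ j, j ≠ i₀ → m j = 0 := by
    by_contra hcon
    push_neg at hcon
    apply hne
    rw [eval_eq]
    apply Finset.sum_eq_zero
    intro d hd
    obtain ⟨j, hj, hdj⟩ := hcon d hd
    have hjm : j ∈ d.support := Finsupp.mem_support_iff.mpr hdj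
    rw [Finset.prod_eq_zero hjm (show pt j ^ d j = 0 by
      show (eval v (f j)) ^ d j = 0
      rw [hfv j hj, zero_pow hdj]), mul_zero]
  set N := ∑ H ∈ A, e H with hN
  have hProd : (∏ H ∈ A, l H ^ e H).IsHomogeneous N := by
    apply IsHomogeneous.prod
    intro H hH
    have := ((hl H hH).1).pow (e H)
    rwa [one_mul] at this
  -- Δ is weighted homogeneous of weight N
  have hWH : Δ.IsWeightedHomogeneous deg N := by
    intro d hd
    by_contra hne'
    set n := (Finsupp.weight deg) d with hn
    set Δn := weightedHomogeneousComponent deg n Δ with hΔn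
    have hΔn_ne : Δn ≠ 0 := by
      intro h0
      have hc := coeff_weightedHomogeneousComponent (w := deg) n Δ d
      rw [← hΔn, h0, if_pos rfl, coeff_zero] at hc
      exact hd hc.symm
    have hsub : ∀ d' ∈ (Δ - Δn).support, (Finsupp.weight deg) d' ≠ n := by
      intro d' hd' hw'
      have hc : coeff d' Δn = coeff d' Δ := by
        rw [hΔn, coeff_weightedHomogeneousComponent, if_pos hw']
      have hcz : coeff d' (Δ - Δn) = 0 := by rw [coeff_sub, hc, sub_self]
      exact (mem_support_iff.mp hd') hcz
    have h2 : homogeneousComponent n (aeval f (Δ - Δn)) = 0 :=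
      my_homComp_aeval_eq_zero f deg hfhom _ n hsub
    have h1 : (aeval f Δn).IsHomogeneous n :=
      my_aeval_isHomogeneous f deg hfhom _ n
        (weightedHomogeneousComponent_isWeightedHomogeneous n Δ)
    have h3 : homogeneousComponent n (aeval f Δ) = aeval f Δn := by
      have hsplit : aeval f Δ = aeval f Δn + aeval f (Δ - Δn) := by
        rw [← map_add]
        congr 1
        ring
      rw [hsplit, map_add, h2, add_zero,
        homogeneousComponent_of_mem ((mem_homogeneousSubmodule _ _).mpr h1), if_pos rfl]
    have h4 : homogeneousComponent n (aeval f Δ) = 0 := by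
      rw [hΔ, homogeneousComponent_of_mem ((mem_homogeneousSubmodule _ _).mpr hProd),
        if_neg hne']
    have : Δn = 0 := hinj (by rw [← h3, h4, map_zero])
    exact hΔn_ne this
  obtain ⟨m₀, hm₀s, hm₀p⟩ := hpure
  have hwm₀ : m₀ i₀ * deg i₀ = N := by
    have h := hWH (mem_support_iff.mp hm₀s)
    rw [my_weight_eq] at h
    rw [← h, Fintype.sum_eq_single i₀ (fun j hj => by rw [hm₀p j hj, zero_mul])]
  have hbound : ∀ m ∈ Δ.support, m i₀ ≤ m₀ i₀ := by
    intro m hm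
    have h := hWH (mem_support_iff.mp hm)
    rw [my_weight_eq] at h
    have h1 : m i₀ * deg i₀ ≤ ∑ j : Fin r, m j * deg j :=
      Finset.single_le_sum (f := fun j => m j * deg j)
        (fun j _ => Nat.zero_le _) (Finset.mem_univ i₀)
    rw [h, ← hwm₀] at h1
    exact Nat.le_of_mul_le_mul_right h1 (hdegpos i₀)
  have hdeg0 : Δ.degreeOf i₀ = m₀ i₀ :=
    le_antisymm (degreeOf_le_iff.mpr hbound) (monomial_le_degreeOf i₀ hm₀s)
  refine ⟨?_, ?_⟩
  · intro h0
    rw [h0, support_zero] at hm₀s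
    exact absurd hm₀s (Finset.notMem_empty _)
  · intro m hm hmi j hj
    have h := hWH (mem_support_iff.mp hm)
    rw [my_weight_eq] at h
    have hsum : ∑ k : Fin r, m k * deg k = m i₀ * deg i₀ := by
      rw [h, ← hwm₀, hmi, hdeg0]
    have hle : m i₀ * deg i₀ + m j * deg j ≤ ∑ k : Fin r, m k * deg k := by
      have hp := Finset.sum_pair (f := fun k => m k * deg k) (Ne.symm hj)
      calc m i₀ * deg i₀ + m j * deg j
          = ∑ k ∈ ({i₀, j} : Finset (Fin r)), m k * deg k := hp.symm
        _ ≤ ∑ k : Fin r, m k * deg k :=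
            Finset.sum_le_sum_of_subset (Finset.subset_univ _)
    rw [hsum] at hle
    have hb : m j * deg j ≤ 0 := by
      have h0 : m i₀ * deg i₀ + m j * deg j ≤ m i₀ * deg i₀ + 0 := by simpa using hle
      exact Nat.le_of_add_le_add_left h0
    rcases Nat.mul_eq_zero.mp (Nat.le_zero.mp hb) with h' | h'
    · exact h'
    · exact absurd h' (Nat.pos_iff_ne_zero.mp (hdegpos j))
end
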